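/- Weighted-norm variance bound. Let φ∈Ψ and δ>0 with k(δ) ≤ m−1, where k(δ) is the largest k≤m with λ_k^{−1}≥δ² (convention λ_k^{−1}=+∞ when λ_k=0, and k(δ)=0 if λ₁^{−1}<δ²). Let (X,X',Y) be a random triple with X,X' independent uniform on V and Y∈{−1,1}. Then E‖Y·𝒫_L(E_{X,X'})‖_w² ≤ (4c+8)·m^{−1}·δ²·φ(k(δ)+1). -/

import Mathlib

/-!
Since `Y² = 1` and `X, X'` are independent and uniform, the expectation is the average
`m⁻² ∑_{u,v} ‖𝒫_L(E_{u,v})‖_w²`. As `⟨φ_k, 𝒫_L(A) φ_j⟩ = ⟨P_L φ_k, A φ_j⟩ + ⟨P_{L⊥} φ_k, A P_L φ_j⟩`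
and `∑_{u,v} ⟨a, E_{u,v} b⟩² ≤ ‖a‖² ‖b‖²`, this average is at most
`2 m⁻² ∑_{k,j} w_k (‖P_L φ_k‖² + ‖P_L φ_j‖²)` with `w_k = λ_k⁻¹ ∧ δ²`.
Put `s = k(δ) + 1`: then `w_k ≤ δ²` for all `k`, and `w_k ≤ λ_k⁻¹ < δ²` for `k ≥ s`.
The tail `∑_{k ≥ s} λ_k⁻¹ ‖P_L φ_k‖²` is bounded by Abel summation against the partial sums
`∑_{j ≤ k} ‖P_L φ_j‖² ≤ φ(k) ≤ (k / s) φ(s)`, and `∑_{k ≥ s} λ_k⁻¹ ≤ c s / λ_s` controls both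
that Abel sum and `∑_k w_k ≤ (1 + c) s δ²`.
-/

open MeasureTheory ProbabilityTheory Matrix
open scoped Classical BigOperators

noncomputable section

variable {m : ℕ}

/-- uniform distribution on `Fin m` -/
def uniformFin (m : ℕ) : Measure (Fin m) := ((m : ENNReal))⁻¹ • Measure.count

/-- squared norm of the orthogonal projection of `x` onto `L` -/
def projNormSq (L : Submodule ℝ (EuclideanSpace ℝ (Fin m)))
    (x : EuclideanSpace ℝ (Fin m)) : ℝ :=
  ‖(L.orthogonalProjectionOnto x : EuclideanSpace ℝ (Fin m))‖ ^ 2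

/-- the matrix of the orthogonal projection onto `L` -/
def projMatrix (L : Submodule ℝ (EuclideanSpace ℝ (Fin m))) : Matrix (Fin m) (Fin m) ℝ :=
  Matrix.toEuclideanLin.symm (L.subtype ∘ₗ (L.orthogonalProjectionOnto).toLinearMap)

/-- `𝒫_L(A) = A − P_{L⊥} A P_{L⊥}` -/
def calP (L : Submodule ℝ (EuclideanSpace ℝ (Fin m))) (A : Matrix (Fin m) (Fin m) ℝ) :
    Matrix (Fin m) (Fin m) ℝ :=
  A - projMatrix Lᗮ * A * projMatrix Lᗮ

/-- the symmetrized elementary matrix `E_{u,v} = ½(e_u ⊗ e_v + e_v ⊗ e_u)` -/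
def Ematrix (u v : Fin m) : Matrix (Fin m) (Fin m) ℝ :=
  (1 / 2 : ℝ) • (Matrix.single u v 1 + Matrix.single v u 1)

/-- the coefficient `⟨A, φ_k ⊗ φ_j⟩` of `A` in the orthonormal basis `φ_k ⊗ φ_j` -/
def pairCoef (A : Matrix (Fin m) (Fin m) ℝ) (x y : EuclideanSpace ℝ (Fin m)) : ℝ :=
  inner ℝ x (Matrix.toEuclideanLin A y)

/-- `k(δ)`: the largest `k ≤ m` with `λ_k⁻¹ ≥ δ²` (with the convention `λ_k⁻¹ = +∞` when
`λ_k = 0`), and `k(δ) = 0` if there is no such `k`. -/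
def kDelta (m : ℕ) (lam : ℕ → ℝ) (δ : ℝ) : ℕ :=
  Finset.sup ((Finset.Icc 1 m).filter (fun k => lam k = 0 ∨ δ ^ 2 ≤ (lam k)⁻¹)) id

/-- the truncated weight `λ_k⁻¹ ∧ δ²` (`= δ²` when `λ_k = 0`) -/
def wCoef (lam : ℕ → ℝ) (δ : ℝ) (k : ℕ) : ℝ :=
  if lam k = 0 then δ ^ 2 else min (lam k)⁻¹ (δ ^ 2)

/-- the squared weighted norm `‖A‖_w² = ∑_{k,j} (λ_k⁻¹ ∧ δ²)|⟨A,φ_k⊗φ_j⟩|²` -/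
def wNormSq (m : ℕ) (lam : ℕ → ℝ) (δ : ℝ) (phi : ℕ → EuclideanSpace ℝ (Fin m))
    (A : Matrix (Fin m) (Fin m) ℝ) : ℝ :=
  ∑ k ∈ Finset.Icc 1 m, ∑ j ∈ Finset.Icc 1 m,
    wCoef lam δ k * (pairCoef A (phi k) (phi j)) ^ 2

lemma Finset.sum_Icc_eq_sum_Ico_add_sum_Icc {M : Type*} [AddCommMonoid M] (g : ℕ → M)
    {a b c : ℕ} (hab : a ≤ b) (hbc : b ≤ c + 1) :
    ∑ k ∈ Finset.Icc a c, g k = ∑ k ∈ Finset.Ico a b, g k + ∑ k ∈ Finset.Icc b c, g k := by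
  rw [← Finset.Ico_add_one_right_eq_Icc, ← Finset.Ico_add_one_right_eq_Icc,
    Finset.sum_Ico_consecutive g hab hbc]

lemma sum_mul_le_of_antitone_of_sum_le {μ π : ℕ → ℝ} {β : ℝ} {s t : ℕ} (hst : s ≤ t)
    (hμ : ∀ k, s ≤ k → k < t → μ (k + 1) ≤ μ k) (hμt : 0 ≤ μ t)
    (hπ : ∀ k, s ≤ k → k ≤ t → ∑ j ∈ Finset.Icc s k, π j ≤ k * β) :
    ∑ k ∈ Finset.Icc s t, μ k * π k ≤ β * (s * μ s + ∑ k ∈ Finset.Ioc s t, μ k) := by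
  -- Abel summation, carried by induction on the upper limit with the slack `n β - ∑ π` attached
  suffices h : ∀ n, s ≤ n → n ≤ t → ∑ k ∈ Finset.Icc s n, μ k * π k
      + μ n * (n * β - ∑ j ∈ Finset.Icc s n, π j) ≤ β * (s * μ s + ∑ k ∈ Finset.Ioc s n, μ k) by
    linarith [h t hst le_rfl, mul_nonneg hμt (sub_nonneg.2 (hπ t hst le_rfl))]
  intro n hsn
  induction n, hsn using Nat.le_induction with
  | base =>
    intro _
    simp only [Finset.Icc_self, Finset.sum_singleton, Finset.Ioc_self, Finset.sum_empty]
    exact le_of_eq (by ring)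
  | succ n hsn ih =>
    intro hnt
    have hslack := mul_le_mul_of_nonneg_right (hμ n hsn (by omega))
      (sub_nonneg.2 (hπ n hsn (by omega)))
    rw [Finset.sum_Icc_succ_top (by omega), Finset.sum_Icc_succ_top (by omega),
      Finset.sum_Ioc_succ_top hsn]
    push_cast
    linarith [ih (by omega)]

lemma le_mul_div_of_div_succ_le {f : ℕ → ℝ} {n s k : ℕ} (hs : 1 ≤ s)
    (hf_ratio : ∀ k, s ≤ k → k < n → f (k + 1) / ((k : ℝ) + 1) ≤ f k / k)
    (hsk : s ≤ k) (hkn : k ≤ n) :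
    f k ≤ k * (f s / s) := by
  have hanti : AntitoneOn (fun k : ℕ => f k / k) (Set.Icc s n) :=
    antitoneOn_of_succ_le Set.ordConnected_Icc fun a _ ha hsa => by
      simpa [Order.succ_eq_add_one] using hf_ratio a ha.1 (Order.succ_le_iff.mp hsa.2)
  have hk0 : (k : ℝ) ≠ 0 := by norm_cast; omega
  calc f k = k * (f k / k) := by field_simp
    _ ≤ k * (f s / s) :=
        mul_le_mul_of_nonneg_left (hanti ⟨le_rfl, hsk.trans hkn⟩ ⟨hsk, hkn⟩ hsk) (Nat.cast_nonneg k)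

lemma integral_comp_of_indepFun_uniformFin {Ω : Type*} [MeasureSpace Ω]
    [IsProbabilityMeasure (ℙ : Measure Ω)] {X X' : Ω → Fin m}
    (hX : Measurable X) (hX' : Measurable X') (hindep : IndepFun X X' ℙ)
    (hXunif : Measure.map X ℙ = uniformFin m) (hX'unif : Measure.map X' ℙ = uniformFin m)
    (g : Fin m → Fin m → ℝ) :
    ∫ ω, g (X ω) (X' ω) ∂ℙ = ((m : ℝ) ^ 2)⁻¹ * ∑ u, ∑ v, g u v := by
  have hmap : Measure.map (fun ω => (X ω, X' ω)) ℙ = (uniformFin m).prod (uniformFin m) := by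
    rw [hindep.map_prod_eq_prod_map_map hX.aemeasurable hX'.aemeasurable, hXunif, hX'unif]
  have hZ : Measurable (fun ω => (X ω, X' ω)) := hX.prodMk hX'
  have := Measure.isProbabilityMeasure_map (μ := (ℙ : Measure Ω)) hZ.aemeasurable
  calc ∫ ω, g (X ω) (X' ω) ∂ℙ
      = ∫ p, g p.1 p.2 ∂(Measure.map (fun ω => (X ω, X' ω)) ℙ) :=
        (integral_map (f := fun p => g p.1 p.2) hZ.aemeasurable .of_discrete).symm
    _ = ∑ p : Fin m × Fin m, (Measure.map (fun ω => (X ω, X' ω)) ℙ).real {p} • g p.1 p.2 :=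
        integral_fintype .of_finite
    _ = ((m : ℝ) ^ 2)⁻¹ * ∑ u, ∑ v, g u v := by
        rw [hmap, Fintype.sum_prod_type, Finset.mul_sum]
        refine Finset.sum_congr rfl fun u _ => ?_
        rw [Finset.mul_sum]
        refine Finset.sum_congr rfl fun v _ => ?_
        rw [← Set.singleton_prod_singleton, measureReal_prod_prod]
        simp [uniformFin, Measure.real, sq]

lemma pairCoef_eq_dotProduct (A : Matrix (Fin m) (Fin m) ℝ) (x y : EuclideanSpace ℝ (Fin m)) :
    pairCoef A x y = x.ofLp ⬝ᵥ (A *ᵥ y.ofLp) := by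
  simp [pairCoef, Matrix.toEuclideanLin, PiLp.inner_apply, dotProduct, mul_comm]

lemma wNormSq_smul (lam : ℕ → ℝ) (δ : ℝ) (phi : ℕ → EuclideanSpace ℝ (Fin m)) (y : ℝ)
    (A : Matrix (Fin m) (Fin m) ℝ) :
    wNormSq m lam δ phi (y • A) = y ^ 2 * wNormSq m lam δ phi A := by
  simp only [wNormSq, pairCoef, map_smul, LinearMap.smul_apply, inner_smul_right, Finset.mul_sum]
  exact Finset.sum_congr rfl fun k _ => Finset.sum_congr rfl fun j _ => by ring

lemma pairCoef_Ematrix (u v : Fin m) (x y : EuclideanSpace ℝ (Fin m)) :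
    pairCoef (Ematrix u v) x y = (x u * y v + x v * y u) / 2 := by
  simp only [Ematrix, one_div, smul_add, smul_single, smul_eq_mul, mul_one, pairCoef_eq_dotProduct,
    add_mulVec, single_mulVec, ← Pi.single.eq_def, dotProduct_add, dotProduct_single]
  ring

lemma pairCoef_calP (L : Submodule ℝ (EuclideanSpace ℝ (Fin m))) (A : Matrix (Fin m) (Fin m) ℝ)
    (x y : EuclideanSpace ℝ (Fin m)) :
    pairCoef (calP L A) x y = pairCoef A (L.starProjection x) y
      + pairCoef A (Lᗮ.starProjection x) (L.starProjection y) := by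
  have hP : ∀ (K : Submodule ℝ (EuclideanSpace ℝ (Fin m))) z,
      Matrix.toEuclideanLin (projMatrix K) z = K.starProjection z := fun K z => by
    simp [projMatrix]
  simp only [pairCoef, calP, map_sub, LinearMap.sub_apply, toLpLin_mul_same, LinearMap.comp_apply,
    hP, inner_sub_right]
  rw [← Submodule.inner_starProjection_left_eq_right]
  simp only [Submodule.starProjection_orthogonal_val, map_sub, inner_sub_left, inner_sub_right]
  ring

lemma sum_sq_pairCoef_Ematrix_le (x y : EuclideanSpace ℝ (Fin m)) :
    ∑ u, ∑ v, pairCoef (Ematrix u v) x y ^ 2 ≤ ‖x‖ ^ 2 * ‖y‖ ^ 2 := by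
  have hxy : ∑ u, ∑ v, (x u * y v) ^ 2 = ‖x‖ ^ 2 * ‖y‖ ^ 2 := by
    simp only [EuclideanSpace.real_norm_sq_eq, Finset.sum_mul_sum, mul_pow]
  have hyx : ∑ u, ∑ v, (x v * y u) ^ 2 = ‖x‖ ^ 2 * ‖y‖ ^ 2 := by
    rw [Finset.sum_comm, hxy]
  calc ∑ u, ∑ v, pairCoef (Ematrix u v) x y ^ 2
      ≤ ∑ u, ∑ v, ((x u * y v) ^ 2 + (x v * y u) ^ 2) / 2 := by
        gcongr with u _ v _
        rw [pairCoef_Ematrix]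
        linarith [add_sq_le (a := x u * y v) (b := x v * y u)]
    _ = ‖x‖ ^ 2 * ‖y‖ ^ 2 := by
        simp only [← Finset.sum_div, Finset.sum_add_distrib, hxy, hyx]
        ring

lemma sum_sq_pairCoef_calP_Ematrix_le (L : Submodule ℝ (EuclideanSpace ℝ (Fin m)))
    {x y : EuclideanSpace ℝ (Fin m)} (hx : ‖x‖ ≤ 1) (hy : ‖y‖ ≤ 1) :
    ∑ u, ∑ v, pairCoef (calP L (Ematrix u v)) x y ^ 2
      ≤ 2 * (projNormSq L x + projNormSq L y) := by
  set Px := L.starProjection x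
  set Py := L.starProjection y
  set Qx := Lᗮ.starProjection x
  have hQx : ‖Qx‖ ^ 2 ≤ 1 := by
    nlinarith [Lᗮ.norm_starProjection_apply_le x, norm_nonneg Qx]
  have hy2 : ‖y‖ ^ 2 ≤ 1 := by nlinarith [norm_nonneg y]
  calc ∑ u, ∑ v, pairCoef (calP L (Ematrix u v)) x y ^ 2
      ≤ ∑ u, ∑ v, 2 * (pairCoef (Ematrix u v) Px y ^ 2 + pairCoef (Ematrix u v) Qx Py ^ 2) := by
        gcongr with u _ v _
        rw [pairCoef_calP]
        exact add_sq_le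
    _ ≤ 2 * (‖Px‖ ^ 2 * ‖y‖ ^ 2 + ‖Qx‖ ^ 2 * ‖Py‖ ^ 2) := by
        simp only [← Finset.mul_sum, Finset.sum_add_distrib]
        gcongr
        · exact sum_sq_pairCoef_Ematrix_le Px y
        · exact sum_sq_pairCoef_Ematrix_le Qx Py
    _ ≤ 2 * (projNormSq L x + projNormSq L y) := by
        simp only [projNormSq, ← Submodule.starProjection_apply]
        gcongr
        · nlinarith [sq_nonneg ‖Px‖]
        · nlinarith [sq_nonneg ‖Py‖]

lemma sum_wNormSq_calP_Ematrix_le (lam : ℕ → ℝ) (δ : ℝ) (phi : ℕ → EuclideanSpace ℝ (Fin m))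
    (L : Submodule ℝ (EuclideanSpace ℝ (Fin m)))
    (hw : ∀ k ∈ Finset.Icc 1 m, 0 ≤ wCoef lam δ k) (hphi : ∀ k ∈ Finset.Icc 1 m, ‖phi k‖ ≤ 1) :
    ∑ u, ∑ v, wNormSq m lam δ phi (calP L (Ematrix u v))
      ≤ ∑ k ∈ Finset.Icc 1 m, ∑ j ∈ Finset.Icc 1 m,
          wCoef lam δ k * (2 * (projNormSq L (phi k) + projNormSq L (phi j))) := by
  calc ∑ u, ∑ v, wNormSq m lam δ phi (calP L (Ematrix u v))
      = ∑ k ∈ Finset.Icc 1 m, ∑ j ∈ Finset.Icc 1 m,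
          wCoef lam δ k * ∑ u, ∑ v, pairCoef (calP L (Ematrix u v)) (phi k) (phi j) ^ 2 := by
        simp only [wNormSq, Finset.mul_sum]
        simp_rw [Finset.sum_comm (s := (Finset.univ : Finset (Fin m))) (t := Finset.Icc 1 m)]
    _ ≤ _ := by
        gcongr with k hk j hj
        · exact hw k hk
        · exact sum_sq_pairCoef_calP_Ematrix_le L (hphi k hk) (hphi j hj)

section

variable {lam : ℕ → ℝ} {δ : ℝ}

lemma wCoef_le_sq (k : ℕ) : wCoef lam δ k ≤ δ ^ 2 := by
  unfold wCoef; split_ifs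
  · exact le_rfl
  · exact min_le_right _ _

lemma wCoef_nonneg {k : ℕ} (hk : 0 ≤ lam k) : 0 ≤ wCoef lam δ k := by
  unfold wCoef; split_ifs
  · positivity
  · exact le_min (inv_nonneg.mpr hk) (sq_nonneg δ)

lemma wCoef_le_inv {k : ℕ} (hk : lam k ≠ 0) : wCoef lam δ k ≤ (lam k)⁻¹ := by
  rw [wCoef, if_neg hk]
  exact min_le_left _ _

lemma lam_ne_zero_and_inv_lt_of_kDelta_lt {k : ℕ} (hk : kDelta m lam δ < k) (hkm : k ≤ m) :
    lam k ≠ 0 ∧ (lam k)⁻¹ < δ ^ 2 := by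
  have hnot : k ∉ (Finset.Icc 1 m).filter (fun k => lam k = 0 ∨ δ ^ 2 ≤ (lam k)⁻¹) :=
    fun hmem => (Finset.le_sup (f := id) hmem).not_gt hk
  simp only [Finset.mem_filter, Finset.mem_Icc, not_and, not_or, not_le] at hnot
  exact hnot ⟨by omega, hkm⟩

end

section

variable {s : ℕ} {lam π f : ℕ → ℝ} {δ c : ℝ}

lemma sum_inv_mul_le (hs : 1 ≤ s) (hsm : s ≤ m) (hc : 0 ≤ c)
    (htail : ∀ k, s ≤ k → k ≤ m → 0 < lam k ∧ (lam k)⁻¹ ≤ δ ^ 2)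
    (hlam_mono : ∀ k, s ≤ k → k < m → lam k ≤ lam (k + 1))
    (hsum : ∑ k ∈ Finset.Icc s m, (lam k)⁻¹ ≤ c * s / lam s)
    (hπ : ∀ k, 0 ≤ π k)
    (hf_ratio : ∀ k, s ≤ k → k < m → f (k + 1) / ((k : ℝ) + 1) ≤ f k / k)
    (hdom : ∀ k, k ≤ m → ∑ j ∈ Finset.Icc 1 k, π j ≤ f k) :
    ∑ k ∈ Finset.Icc s m, (lam k)⁻¹ * π k ≤ (1 + c) * δ ^ 2 * f s := by
  have hfs : 0 ≤ f s := (Finset.sum_nonneg fun j _ => hπ j).trans (hdom s hsm)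
  have hs0 : (s : ℝ) ≠ 0 := by positivity
  obtain ⟨hlam_s, hinv_s⟩ := htail s le_rfl hsm
  have habel := sum_mul_le_of_antitone_of_sum_le (μ := fun k => (lam k)⁻¹) (β := f s / s) hsm
    (fun k hsk hkm => inv_anti₀ (htail k hsk hkm.le).1 (hlam_mono k hsk hkm))
    (inv_nonneg.2 (htail m hsm le_rfl).1.le)
    (fun k hsk hkm => (Finset.sum_le_sum_of_subset_of_nonneg (Finset.Icc_subset_Icc_left hs)
      fun j _ _ => hπ j).trans ((hdom k hkm).trans (le_mul_div_of_div_succ_le hs hf_ratio hsk hkm)))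
  have hIoc : ∑ k ∈ Finset.Ioc s m, (lam k)⁻¹ ≤ c * s * (lam s)⁻¹ :=
    (Finset.sum_le_sum_of_subset_of_nonneg Finset.Ioc_subset_Icc_self fun k hk _ =>
      (inv_pos.2 (htail k (Finset.mem_Icc.1 hk).1 (Finset.mem_Icc.1 hk).2).1).le).trans
      (by rwa [div_eq_mul_inv] at hsum)
  calc ∑ k ∈ Finset.Icc s m, (lam k)⁻¹ * π k
      ≤ f s / s * (s * (lam s)⁻¹ + ∑ k ∈ Finset.Ioc s m, (lam k)⁻¹) := habel
    _ ≤ f s / s * (s * (lam s)⁻¹ + c * s * (lam s)⁻¹) := by gcongr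
    _ = (1 + c) * (lam s)⁻¹ * f s := by field_simp
    _ ≤ (1 + c) * δ ^ 2 * f s := by gcongr

lemma sum_wCoef_mul_le (hs : 1 ≤ s) (hsm : s ≤ m) (hc : 0 ≤ c)
    (htail : ∀ k, s ≤ k → k ≤ m → 0 < lam k ∧ (lam k)⁻¹ ≤ δ ^ 2)
    (hlam_mono : ∀ k, s ≤ k → k < m → lam k ≤ lam (k + 1))
    (hsum : ∑ k ∈ Finset.Icc s m, (lam k)⁻¹ ≤ c * s / lam s)
    (hπ : ∀ k, 0 ≤ π k)
    (hf_ratio : ∀ k, s ≤ k → k < m → f (k + 1) / ((k : ℝ) + 1) ≤ f k / k)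
    (hdom : ∀ k, k ≤ m → ∑ j ∈ Finset.Icc 1 k, π j ≤ f k) :
    ∑ k ∈ Finset.Icc 1 m, wCoef lam δ k * π k ≤ (2 + c) * δ ^ 2 * f s := by
  rw [Finset.sum_Icc_eq_sum_Ico_add_sum_Icc _ hs (by omega)]
  have hhead : ∑ k ∈ Finset.Ico 1 s, wCoef lam δ k * π k ≤ δ ^ 2 * f s :=
    calc ∑ k ∈ Finset.Ico 1 s, wCoef lam δ k * π k ≤ ∑ k ∈ Finset.Ico 1 s, δ ^ 2 * π k :=
          Finset.sum_le_sum fun k _ => mul_le_mul_of_nonneg_right (wCoef_le_sq k) (hπ k)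
      _ ≤ δ ^ 2 * ∑ k ∈ Finset.Icc 1 s, π k := by
          rw [← Finset.mul_sum]
          exact mul_le_mul_of_nonneg_left (Finset.sum_le_sum_of_subset_of_nonneg
            Finset.Ico_subset_Icc_self fun k _ _ => hπ k) (sq_nonneg δ)
      _ ≤ δ ^ 2 * f s := by gcongr; exact hdom s hsm
  have htail_sum : ∑ k ∈ Finset.Icc s m, wCoef lam δ k * π k ≤ (1 + c) * δ ^ 2 * f s :=
    (Finset.sum_le_sum fun k hk => mul_le_mul_of_nonneg_right
      (wCoef_le_inv (htail k (Finset.mem_Icc.1 hk).1 (Finset.mem_Icc.1 hk).2).1.ne') (hπ k)).trans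
      (sum_inv_mul_le hs hsm hc htail hlam_mono hsum hπ hf_ratio hdom)
  linarith

lemma sum_wCoef_le (hs : 1 ≤ s) (hsm : s ≤ m) (hc : 0 ≤ c)
    (htail : ∀ k, s ≤ k → k ≤ m → 0 < lam k ∧ (lam k)⁻¹ ≤ δ ^ 2)
    (hsum : ∑ k ∈ Finset.Icc s m, (lam k)⁻¹ ≤ c * s / lam s) :
    ∑ k ∈ Finset.Icc 1 m, wCoef lam δ k ≤ (1 + c) * s * δ ^ 2 := by
  rw [Finset.sum_Icc_eq_sum_Ico_add_sum_Icc _ hs (by omega)]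
  have hhead : ∑ k ∈ Finset.Ico 1 s, wCoef lam δ k ≤ s * δ ^ 2 := by
    refine (Finset.sum_le_card_nsmul _ _ _ fun k _ => wCoef_le_sq k).trans ?_
    rw [Nat.card_Ico, nsmul_eq_mul]
    gcongr
    exact_mod_cast Nat.sub_le s 1
  have htail_sum : ∑ k ∈ Finset.Icc s m, wCoef lam δ k ≤ c * s * δ ^ 2 :=
    calc ∑ k ∈ Finset.Icc s m, wCoef lam δ k ≤ ∑ k ∈ Finset.Icc s m, (lam k)⁻¹ :=
          Finset.sum_le_sum fun k hk =>
            wCoef_le_inv (htail k (Finset.mem_Icc.1 hk).1 (Finset.mem_Icc.1 hk).2).1.ne'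
      _ ≤ c * s * (lam s)⁻¹ := by rwa [← div_eq_mul_inv]
      _ ≤ c * s * δ ^ 2 := by gcongr; exact (htail s le_rfl hsm).2
  linarith

lemma sum_sum_wCoef_mul_add_le (hs : 1 ≤ s) (hsm : s ≤ m) (hc : 0 ≤ c)
    (hlam_nonneg : ∀ k, 1 ≤ k → k ≤ m → 0 ≤ lam k)
    (htail : ∀ k, s ≤ k → k ≤ m → 0 < lam k ∧ (lam k)⁻¹ ≤ δ ^ 2)
    (hlam_mono : ∀ k, s ≤ k → k < m → lam k ≤ lam (k + 1))
    (hsum : ∑ k ∈ Finset.Icc s m, (lam k)⁻¹ ≤ c * s / lam s)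
    (hπ : ∀ k, 0 ≤ π k)
    (hf_ratio : ∀ k, s ≤ k → k < m → f (k + 1) / ((k : ℝ) + 1) ≤ f k / k)
    (hdom : ∀ k, k ≤ m → ∑ j ∈ Finset.Icc 1 k, π j ≤ f k) :
    ∑ k ∈ Finset.Icc 1 m, ∑ j ∈ Finset.Icc 1 m, wCoef lam δ k * (2 * (π k + π j))
      ≤ (4 * c + 8) * m * δ ^ 2 * f s := by
  have hfs : 0 ≤ f s := (Finset.sum_nonneg fun j _ => hπ j).trans (hdom s hsm)
  have hs0 : (s : ℝ) ≠ 0 := by positivity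
  have hw : 0 ≤ ∑ k ∈ Finset.Icc 1 m, wCoef lam δ k := Finset.sum_nonneg fun k hk =>
    wCoef_nonneg (hlam_nonneg k (Finset.mem_Icc.1 hk).1 (Finset.mem_Icc.1 hk).2)
  have hπm : ∑ j ∈ Finset.Icc 1 m, π j ≤ m * (f s / s) :=
    (hdom m le_rfl).trans (le_mul_div_of_div_succ_le hs hf_ratio hsm le_rfl)
  calc ∑ k ∈ Finset.Icc 1 m, ∑ j ∈ Finset.Icc 1 m, wCoef lam δ k * (2 * (π k + π j))
      = 2 * m * ∑ k ∈ Finset.Icc 1 m, wCoef lam δ k * π k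
          + 2 * ((∑ k ∈ Finset.Icc 1 m, wCoef lam δ k) * ∑ j ∈ Finset.Icc 1 m, π j) := by
        rw [Finset.sum_mul_sum]
        simp only [mul_add, Finset.sum_add_distrib, Finset.sum_const, Nat.card_Icc, nsmul_eq_mul,
          Finset.mul_sum]
        push_cast
        congr 1 <;> refine Finset.sum_congr rfl fun k _ => ?_
        · ring
        · exact Finset.sum_congr rfl fun j _ => by ring
    _ ≤ 2 * m * ((2 + c) * δ ^ 2 * f s) + 2 * ((1 + c) * s * δ ^ 2 * (m * (f s / s))) := by
        gcongr 2 * m * ?_ + 2 * ?_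
        · exact sum_wCoef_mul_le hs hsm hc htail hlam_mono hsum hπ hf_ratio hdom
        · exact mul_le_mul (sum_wCoef_le hs hsm hc htail hsum) hπm
            (Finset.sum_nonneg fun j _ => hπ j) (by positivity)
    _ = (4 * c + 6) * m * δ ^ 2 * f s := by field_simp; ring
    _ ≤ (4 * c + 8) * m * δ ^ 2 * f s := by gcongr; linarith

end

theorem weighted_norm_variance_bound_general
    {Ω : Type*} [MeasureSpace Ω] [IsProbabilityMeasure (ℙ : Measure Ω)]
    (m : ℕ) (hm : 2 ≤ m) (c : ℝ) (hc : 0 < c)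
    (lam : ℕ → ℝ) (k0 : ℕ)
    (hlam_nonneg : ∀ k, 1 ≤ k → k ≤ m → 0 ≤ lam k)
    (hlam_mono : ∀ k, 1 ≤ k → k < m → lam k ≤ lam (k + 1))
    (hk0_min : ∀ k, 1 ≤ k → k ≤ m → 0 < lam k → k0 ≤ k)
    (hsum : ∀ s, k0 ≤ s → s ≤ m → ∑ k ∈ Finset.Icc s m, (lam k)⁻¹ ≤ c * s / lam s)
    (phi : ℕ → EuclideanSpace ℝ (Fin m))
    (horth : Orthonormal ℝ (fun k : Fin m => phi ((k : ℕ) + 1)))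
    (L : Submodule ℝ (EuclideanSpace ℝ (Fin m)))
    (f : ℕ → ℝ)
    (hf_ratio : ∀ k, 1 ≤ k → k < m → f (k + 1) / ((k : ℝ) + 1) ≤ f k / k)
    (hf_dom : ∀ k, k ≤ m → ∑ j ∈ Finset.Icc 1 k, projNormSq L (phi j) ≤ f k)
    (δ : ℝ) (hkδ : kDelta m lam δ ≤ m - 1)
    (X X' : Ω → Fin m) (Y : Ω → ℝ)
    (hXmeas : Measurable X) (hX'meas : Measurable X')
    (hindep : IndepFun X X' ℙ)
    (hXunif : Measure.map X ℙ = uniformFin m)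
    (hX'unif : Measure.map X' ℙ = uniformFin m)
    (hY : ∀ᵐ ω ∂ℙ, Y ω = 1 ∨ Y ω = -1) :
    ∫ ω, wNormSq m lam δ phi (Y ω • calP L (Ematrix (X ω) (X' ω))) ∂ℙ ≤
      (4 * c + 8) * (m : ℝ)⁻¹ * δ ^ 2 * f (kDelta m lam δ + 1) := by
  set s := kDelta m lam δ + 1
  have hs : 1 ≤ s := Nat.le_add_left 1 _
  have hsm : s ≤ m := by omega
  have htail : ∀ k, s ≤ k → k ≤ m → 0 < lam k ∧ (lam k)⁻¹ ≤ δ ^ 2 := fun k hsk hkm =>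
    have h := lam_ne_zero_and_inv_lt_of_kDelta_lt hsk hkm
    ⟨(hlam_nonneg k (hs.trans hsk) hkm).lt_of_ne' h.1, h.2.le⟩
  have hphi : ∀ k ∈ Finset.Icc 1 m, ‖phi k‖ ≤ 1 := fun k hk => by
    obtain ⟨hk1, hkm⟩ := Finset.mem_Icc.1 hk
    simpa [Nat.sub_add_cancel hk1] using (horth.1 ⟨k - 1, by omega⟩).le
  have hY2 : ∀ᵐ ω ∂ℙ, wNormSq m lam δ phi (Y ω • calP L (Ematrix (X ω) (X' ω)))
      = wNormSq m lam δ phi (calP L (Ematrix (X ω) (X' ω))) :=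
    hY.mono fun ω hω => by rcases hω with h | h <;> rw [wNormSq_smul, h] <;> norm_num
  have hm0 : (m : ℝ) ≠ 0 := by positivity
  calc ∫ ω, wNormSq m lam δ phi (Y ω • calP L (Ematrix (X ω) (X' ω))) ∂ℙ
      = ((m : ℝ) ^ 2)⁻¹ * ∑ u, ∑ v, wNormSq m lam δ phi (calP L (Ematrix u v)) := by
        rw [integral_congr_ae hY2]
        exact integral_comp_of_indepFun_uniformFin hXmeas hX'meas hindep hXunif hX'unif
          fun u v => wNormSq m lam δ phi (calP L (Ematrix u v))
    _ ≤ ((m : ℝ) ^ 2)⁻¹ * ((4 * c + 8) * m * δ ^ 2 * f s) := by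
        gcongr
        refine (sum_wNormSq_calP_Ematrix_le lam δ phi L
          (fun k hk => wCoef_nonneg (hlam_nonneg k (Finset.mem_Icc.1 hk).1 (Finset.mem_Icc.1 hk).2))
          hphi).trans ?_
        exact sum_sum_wCoef_mul_add_le hs hsm hc.le hlam_nonneg htail
          (fun k hk => hlam_mono k (hs.trans hk))
          (hsum s (hk0_min s hs hsm (htail s le_rfl hsm).1) hsm)
          (fun k => by unfold projNormSq; positivity) (fun k hk => hf_ratio k (hs.trans hk)) hf_dom
    _ = (4 * c + 8) * (m : ℝ)⁻¹ * δ ^ 2 * f s := by field_simp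

/-- **Weighted-norm variance bound.** Let `φ ∈ Ψ`, `δ > 0` with `k(δ) ≤ m−1`, and let
`(X,X',Y)` be a random triple with `X,X'` independent uniform on `V` and `Y ∈ {−1,1}`. Then
`E‖Y·𝒫_L(E_{X,X'})‖_w² ≤ (4c+8) m⁻¹ δ² φ(k(δ)+1)`. -/
theorem weighted_norm_variance_bound
    {Ω : Type*} [MeasureSpace Ω] [IsProbabilityMeasure (ℙ : Measure Ω)]
    (m : ℕ) (hm : 2 ≤ m) (c : ℝ) (hc : 0 < c)
    (lam : ℕ → ℝ) (k0 : ℕ)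
    (hlam_nonneg : ∀ k, 1 ≤ k → k ≤ m → 0 ≤ lam k)
    (hlam_mono : ∀ k, 1 ≤ k → k < m → lam k ≤ lam (k + 1))
    (hk0_mem : 1 ≤ k0 ∧ k0 ≤ m) (hk0_pos : 0 < lam k0)
    (hk0_min : ∀ k, 1 ≤ k → k ≤ m → 0 < lam k → k0 ≤ k)
    (hratio : ∀ k, k0 ≤ k → k < m → ((k : ℝ) + 1) / lam (k + 1) ≤ (k : ℝ) / lam k)
    (hgap : ∀ k, k0 ≤ k → k < m → lam (k + 1) ≤ c * lam k)
    (hsum : ∀ s, k0 ≤ s → s ≤ m → ∑ k ∈ Finset.Icc s m, (lam k)⁻¹ ≤ c * s / lam s)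
    (phi : ℕ → EuclideanSpace ℝ (Fin m))
    (horth : Orthonormal ℝ (fun k : Fin m => phi ((k : ℕ) + 1)))
    (L : Submodule ℝ (EuclideanSpace ℝ (Fin m)))
    (r : ℕ) (hr : Module.finrank ℝ L = r) (hr1 : 1 ≤ r)
    (f : ℕ → ℝ)
    (hf_mono : ∀ k, k < m → f k ≤ f (k + 1))
    (hf_ratio : ∀ k, 1 ≤ k → k < m → f (k + 1) / ((k : ℝ) + 1) ≤ f k / k)
    (hf_dom : ∀ k, k ≤ m → ∑ j ∈ Finset.Icc 1 k, projNormSq L (phi j) ≤ f k)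
    (δ : ℝ) (hδ : 0 < δ) (hkδ : kDelta m lam δ ≤ m - 1)
    (X X' : Ω → Fin m) (Y : Ω → ℝ)
    (hXmeas : Measurable X) (hX'meas : Measurable X') (hYmeas : Measurable Y)
    (hindep : IndepFun X X' ℙ)
    (hXunif : Measure.map X ℙ = uniformFin m)
    (hX'unif : Measure.map X' ℙ = uniformFin m)
    (hY : ∀ᵐ ω ∂ℙ, Y ω = 1 ∨ Y ω = -1) :
    ∫ ω, wNormSq m lam δ phi (Y ω • calP L (Ematrix (X ω) (X' ω))) ∂ℙ ≤
      (4 * c + 8) * (m : ℝ)⁻¹ * δ ^ 2 * f (kDelta m lam δ + 1) :=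
  weighted_norm_variance_bound_general m hm c hc lam k0 hlam_nonneg hlam_mono hk0_min hsum phi horth
    L f hf_ratio hf_dom δ hkδ X X' Y hXmeas hX'meas hindep hXunif hX'unif hY

end
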